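/- In a BK-puzzle of size n whose boundary content is (n_1,…,n_d), for each pair i > j the total number of (i,j)-rhombi equals n_i · n_j, and for each i the number of upward-pointing i-triangles is C(n_i + 1, 2) and the number of downward-pointing i-triangles is C(n_i, 2). -/
import Mathlib


/-!  Combinatorial model of BK-puzzles.

A BK-puzzle of size `n` is a tiling of an upward triangle of side `n` in the
triangular lattice by unit triangles, all of whose edges carry the same single
label `i`, and by unit rhombi with edge labels `i,j,i,j` (`i > j`); rhombi may be
rotated but not reflected, and adjacent pieces must have matching edge labels.

We use lattice coordinates: vertices are `(a,b)` with `a + b ≤ n`, the vertex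
`(a,b)` sitting at planar position `(a + b/2, b·√3/2)`; so `(0,0)` is the SW
corner, `(n,0)` the SE corner and `(0,n)` the top (N) corner.  Edges:
* `hl a b` : the horizontal edge from `(a,b)` to `(a+1,b)`  (for `a+b < n`);
* `ll a b` : the `/`-edge from `(a,b)` to `(a,b+1)`         (for `a+b < n`);
* `rl a b` : the `\`-edge from `(a+1,b)` to `(a,b+1)`       (for `a+b < n`).

A rhombus is recorded by labelling its internal (short) diagonal with the pair
`Lbl.pair i j` (`i > j`); its two unit-triangle halves are then constrained by
`upOK` / `downOK` below, which list the unit triangle `(i,i,i)` together with the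
three rotations of the rhombus (one for each direction of the internal diagonal),
with the orientation (chirality) convention of Knutson–Purbhoo:
* internal diagonal `\` (NE/SW-pointing rhombus): horizontal edges `i`, `/`-edges `j`;
* internal diagonal `/` (NW/SE-pointing rhombus): horizontal edges `j`, `\`-edges `i`;
* internal diagonal horizontal (N/S-pointing rhombus): `/`-edges `i`, `\`-edges `j`.
-/

/-- An edge label: a single letter, or a pair `(i,j)` (with `i > j`) marking the
internal diagonal of an `(i,j)`-rhombus. -/
inductive Lbl where
  | single (i : ℕ)
  | pair (i j : ℕ)
deriving DecidableEq

/-- Allowed labelings `(bottom, left, right)` of an upward unit triangle. -/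
def upOK : Lbl → Lbl → Lbl → Prop := fun B L R =>
  (∃ i, B = .single i ∧ L = .single i ∧ R = .single i) ∨
  (∃ i j, j < i ∧ B = .single i ∧ L = .single j ∧ R = .pair i j) ∨
  (∃ i j, j < i ∧ B = .single j ∧ L = .pair i j ∧ R = .single i) ∨
  (∃ i j, j < i ∧ B = .pair i j ∧ L = .single i ∧ R = .single j)

/-- Allowed labelings `(top, left, right)` of a downward unit triangle. -/
def downOK : Lbl → Lbl → Lbl → Prop := fun T L R =>
  (∃ i, T = .single i ∧ L = .single i ∧ R = .single i) ∨
  (∃ i j, j < i ∧ T = .single i ∧ L = .pair i j ∧ R = .single j) ∨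
  (∃ i j, j < i ∧ T = .single j ∧ L = .single i ∧ R = .pair i j) ∨
  (∃ i j, j < i ∧ T = .pair i j ∧ L = .single j ∧ R = .single i)

/-- A BK-puzzle of size `n`: a labeling of all lattice edges of the size-`n`
triangle such that every upward and downward unit triangle is (half of) a legal
puzzle piece, with matching labels on shared edges. -/
structure BKPuzzle (n : ℕ) where
  hl : ℕ → ℕ → Lbl
  ll : ℕ → ℕ → Lbl
  rl : ℕ → ℕ → Lbl
  up_ok : ∀ a b, a + b < n → upOK (hl a b) (ll a b) (rl a b)
  down_ok : ∀ a b, a + b + 1 < n → downOK (hl a (b + 1)) (rl a b) (ll (a + 1) b)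

/-- `HasBoundary P π ρ σ` : the puzzle `P` has boundary word `π` on the NW side,
`ρ` on the NE side and `σ` on the S side, all read left to right (NW: bottom to
top; NE: top to bottom; S: west to east). -/
def HasBoundary {n : ℕ} (P : BKPuzzle n) (π ρ σ : List ℕ) : Prop :=
  π.length = n ∧ ρ.length = n ∧ σ.length = n ∧
  (∀ b, b < n → P.ll 0 b = Lbl.single (π.getD b 0)) ∧
  (∀ a, a < n → P.rl a (n - 1 - a) = Lbl.single (ρ.getD a 0)) ∧
  (∀ a, a < n → P.hl a 0 = Lbl.single (σ.getD a 0))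

/-- Number of `(i,j)`-rhombi whose internal diagonal is horizontal, i.e. whose
acute corners point North and South ("a corner pointing South"). -/
def southPointingCount {n : ℕ} (P : BKPuzzle n) (i j : ℕ) : ℕ :=
  ((Finset.range n ×ˢ Finset.range n).filter
    (fun ab => ab.1 + ab.2 < n ∧ P.hl ab.1 ab.2 = Lbl.pair i j)).card

/-- Number of `(i,j)`-rhombi whose internal diagonal is a `/`-edge, i.e. whose
acute corners point NW and SE ("a corner pointing NW"). -/
def nwPointingCount {n : ℕ} (P : BKPuzzle n) (i j : ℕ) : ℕ :=
  ((Finset.range n ×ˢ Finset.range n).filter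
    (fun ab => ab.1 + ab.2 < n ∧ P.ll ab.1 ab.2 = Lbl.pair i j)).card

/-- Number of `(i,j)`-rhombi whose internal diagonal is a `\`-edge, i.e. whose
acute corners point NE and SW ("a corner pointing NE"). -/
def nePointingCount {n : ℕ} (P : BKPuzzle n) (i j : ℕ) : ℕ :=
  ((Finset.range n ×ˢ Finset.range n).filter
    (fun ab => ab.1 + ab.2 < n ∧ P.rl ab.1 ab.2 = Lbl.pair i j)).card

/-- Total number of `(i,j)`-rhombi in the puzzle. -/
def rhombiCount {n : ℕ} (P : BKPuzzle n) (i j : ℕ) : ℕ :=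
  southPointingCount P i j + nwPointingCount P i j + nePointingCount P i j

/-- Number of upward-pointing `i`-triangles. -/
def upTriCount {n : ℕ} (P : BKPuzzle n) (i : ℕ) : ℕ :=
  ((Finset.range n ×ˢ Finset.range n).filter
    (fun ab => ab.1 + ab.2 < n ∧ P.hl ab.1 ab.2 = Lbl.single i ∧
      P.ll ab.1 ab.2 = Lbl.single i ∧ P.rl ab.1 ab.2 = Lbl.single i)).card

/-- Number of downward-pointing `i`-triangles. -/
def downTriCount {n : ℕ} (P : BKPuzzle n) (i : ℕ) : ℕ :=
  ((Finset.range n ×ˢ Finset.range n).filter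
    (fun ab => ab.1 + ab.2 + 1 < n ∧ P.hl ab.1 (ab.2 + 1) = Lbl.single i ∧
      P.rl ab.1 ab.2 = Lbl.single i ∧ P.ll (ab.1 + 1) ab.2 = Lbl.single i)).card


namespace BKaux

/-- right-field of an edge, horizontal type -/
def fRh (r : ℕ → ℤ) : Lbl → ℤ
  | .single k => r k
  | .pair _ j => r j
def fRl (r : ℕ → ℤ) : Lbl → ℤ
  | .single _ => 0
  | .pair i j => r j - r i
def fRr (r : ℕ → ℤ) : Lbl → ℤ
  | .single k => r k
  | .pair i _ => r i
def fLh (m : ℕ → ℤ) : Lbl → ℤ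
  | .single k => m k
  | .pair i _ => m i
def fLl (m : ℕ → ℤ) : Lbl → ℤ
  | .single k => m k
  | .pair _ j => m j
def fLr (m : ℕ → ℤ) : Lbl → ℤ
  | .single _ => 0
  | .pair i j => m i - m j

/-- conservation across an up triangle -/
lemma upR {B L R : Lbl} (h : upOK B L R) (r : ℕ → ℤ) :
    fRl r L + fRr r R = fRh r B := by
  rcases h with ⟨i, hB, hL, hR⟩ | ⟨i, j, _, hB, hL, hR⟩ | ⟨i, j, _, hB, hL, hR⟩ |
    ⟨i, j, _, hB, hL, hR⟩ <;> subst hB <;> subst hL <;> subst hR <;>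
    simp [fRl, fRr, fRh] <;> ring

lemma upL {B L R : Lbl} (h : upOK B L R) (m : ℕ → ℤ) :
    fLl m L + fLr m R = fLh m B := by
  rcases h with ⟨i, hB, hL, hR⟩ | ⟨i, j, _, hB, hL, hR⟩ | ⟨i, j, _, hB, hL, hR⟩ |
    ⟨i, j, _, hB, hL, hR⟩ <;> subst hB <;> subst hL <;> subst hR <;>
    simp [fLl, fLr, fLh] <;> ring

lemma upZero {B L R : Lbl} (h : upOK B L R) (r m : ℕ → ℤ) :
    fRl r L * fLr m R = 0 := by
  rcases h with ⟨i, hB, hL, hR⟩ | ⟨i, j, _, hB, hL, hR⟩ | ⟨i, j, _, hB, hL, hR⟩ |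
    ⟨i, j, _, hB, hL, hR⟩ <;> subst hL <;> subst hR <;> simp [fRl, fLr]

lemma dnR {T L R : Lbl} (h : downOK T L R) (r : ℕ → ℤ) :
    fRr r L + fRl r R = fRh r T := by
  rcases h with ⟨i, hB, hL, hR⟩ | ⟨i, j, _, hB, hL, hR⟩ | ⟨i, j, _, hB, hL, hR⟩ |
    ⟨i, j, _, hB, hL, hR⟩ <;> subst hB <;> subst hL <;> subst hR <;>
    simp [fRl, fRr, fRh] <;> ring

lemma dnL {T L R : Lbl} (h : downOK T L R) (m : ℕ → ℤ) :
    fLr m L + fLl m R = fLh m T := by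
  rcases h with ⟨i, hB, hL, hR⟩ | ⟨i, j, _, hB, hL, hR⟩ | ⟨i, j, _, hB, hL, hR⟩ |
    ⟨i, j, _, hB, hL, hR⟩ <;> subst hB <;> subst hL <;> subst hR <;>
    simp [fLl, fLr, fLh] <;> ring

lemma dnZero {T L R : Lbl} (h : downOK T L R) (r m : ℕ → ℤ) :
    fRl r R * fLr m L = 0 := by
  rcases h with ⟨i, hB, hL, hR⟩ | ⟨i, j, _, hB, hL, hR⟩ | ⟨i, j, _, hB, hL, hR⟩ |
    ⟨i, j, _, hB, hL, hR⟩ <;> subst hL <;> subst hR <;> simp [fRl, fLr]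



open Finset

def dsum (f g : ℕ → ℤ) (n : ℕ) : ℤ :=
  ∑ b ∈ range n, (∑ a ∈ range (b + 1), f a) * g b

def dsumS (f g : ℕ → ℤ) (n : ℕ) : ℤ :=
  ∑ b ∈ range n, (∑ a ∈ range b, f a) * g b

lemma dsum_congr {f f' g g' : ℕ → ℤ} {n : ℕ} (hf : ∀ a < n, f a = f' a)
    (hg : ∀ a < n, g a = g' a) : dsum f g n = dsum f' g' n := by
  unfold dsum
  refine Finset.sum_congr rfl fun b hb => ?_
  rw [mem_range] at hb
  rw [hg b hb]
  congr 1
  refine Finset.sum_congr rfl fun a ha => ?_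
  rw [mem_range] at ha
  exact hf a (by omega)

lemma dsumS_congr {f f' g g' : ℕ → ℤ} {n : ℕ} (hf : ∀ a < n, f a = f' a)
    (hg : ∀ a < n, g a = g' a) : dsumS f g n = dsumS f' g' n := by
  unfold dsumS
  refine Finset.sum_congr rfl fun b hb => ?_
  rw [mem_range] at hb
  rw [hg b hb]
  congr 1
  refine Finset.sum_congr rfl fun a ha => ?_
  rw [mem_range] at ha
  exact hf a (by omega)

lemma dsum_swap (f g : ℕ → ℤ) (n : ℕ) :
    dsum f g n + dsum g f n =
      (∑ a ∈ range n, f a) * (∑ a ∈ range n, g a) + ∑ a ∈ range n, f a * g a := by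
  induction n with
  | zero => simp [dsum]
  | succ n ih =>
    unfold dsum at ih ⊢
    have h1 := Finset.sum_range_succ (fun b => (∑ a ∈ range (b + 1), f a) * g b) n
    have h2 := Finset.sum_range_succ (fun b => (∑ a ∈ range (b + 1), g a) * f b) n
    have h3 := Finset.sum_range_succ f n
    have h4 := Finset.sum_range_succ g n
    have h5 := Finset.sum_range_succ (fun a => f a * g a) n
    rw [h1, h2, h3, h4, h5]
    linear_combination ih

lemma dsum_strict (f g : ℕ → ℤ) (n : ℕ) :
    dsum f g n = dsumS f g n + ∑ a ∈ range n, f a * g a := by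
  unfold dsum dsumS
  rw [← Finset.sum_add_distrib]
  refine Finset.sum_congr rfl fun b _ => ?_
  rw [Finset.sum_range_succ f]
  ring

lemma shift_sum (f : ℕ → ℤ) (n : ℕ) :
    ∑ a ∈ range n, f (a + 1) = ∑ a ∈ range (n + 1), f a - f 0 := by
  rw [Finset.sum_range_succ' f]
  ring

lemma rowA (l r lp rp : ℕ → ℤ) (n : ℕ) :
    dsum (fun a => l a + r a) (fun a => lp a + rp a) (n + 1) =
      (∑ a ∈ range (n + 1), r a * lp a) - (∑ a ∈ range n, l (a + 1) * rp a)
      + dsum (fun a => r a + l (a + 1)) (fun a => rp a + lp (a + 1)) n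
      + l 0 * (∑ a ∈ range (n + 1), (lp a + rp a))
      + ((∑ a ∈ range n, (r a + l (a + 1))) + r n) * rp n := by
  induction n with
  | zero =>
    simp only [dsum, Finset.sum_range_succ, Finset.sum_range_zero]
    ring
  | succ n ih =>
    simp only [dsum] at ih ⊢
    have e1 := Finset.sum_range_succ
      (fun b => (∑ a ∈ range (b + 1), (l a + r a)) * (lp b + rp b)) (n + 1)
    rw [e1, ih]
    have e2 := Finset.sum_range_succ
      (fun b => (∑ a ∈ range (b + 1), (r a + l (a + 1))) * (rp b + lp (b + 1))) n
    have e3 := Finset.sum_range_succ (fun a => r a * lp a) (n + 1)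
    have e4 := Finset.sum_range_succ (fun a => r a * lp a) n
    have e5 := Finset.sum_range_succ (fun a => l (a + 1) * rp a) n
    have e6 := Finset.sum_range_succ (fun a => lp a + rp a) (n + 1)
    have e7 := Finset.sum_range_succ (fun a => lp a + rp a) n
    have e8 := Finset.sum_range_succ (fun a => r a + l (a + 1)) (n + 1)
    have e9 := Finset.sum_range_succ (fun a => r a + l (a + 1)) n
    have e10 := Finset.sum_range_succ (fun a => l a + r a) (n + 1)
    have e11 := Finset.sum_range_succ (fun a => l a + r a) n
    have hrel : ∑ a ∈ range n, (l a + r a)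
        = (∑ a ∈ range n, (r a + l (a + 1))) + l 0 - l n := by
      rw [Finset.sum_add_distrib, Finset.sum_add_distrib, shift_sum l n,
        Finset.sum_range_succ l]
      ring
    rw [e2, e3, e4, e5, e6, e7, e9, e10, e11, hrel]
    ring

lemma rowB (l r lp rp : ℕ → ℤ) (n : ℕ) :
    dsumS (fun a => l a + r a) (fun a => lp a + rp a) (n + 1) =
      (∑ a ∈ range n, r a * lp (a + 1)) - (∑ a ∈ range (n + 1), l a * rp a)
      + dsumS (fun a => r a + l (a + 1)) (fun a => rp a + lp (a + 1)) n
      + l 0 * ((∑ a ∈ range (n + 1), (lp a + rp a)) - (lp 0 + rp 0) + rp 0)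
      + (∑ a ∈ range n, (r a + l (a + 1))) * rp n := by
  induction n with
  | zero =>
    simp only [dsumS, Finset.sum_range_succ, Finset.sum_range_zero]
    ring
  | succ n ih =>
    simp only [dsumS] at ih ⊢
    have e1 := Finset.sum_range_succ
      (fun b => (∑ a ∈ range b, (l a + r a)) * (lp b + rp b)) (n + 1)
    rw [e1, ih]
    have e2 := Finset.sum_range_succ
      (fun b => (∑ a ∈ range b, (r a + l (a + 1))) * (rp b + lp (b + 1))) n
    have e3 := Finset.sum_range_succ (fun a => r a * lp (a + 1)) n
    have e4 := Finset.sum_range_succ (fun a => l a * rp a) (n + 1)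
    have e5 := Finset.sum_range_succ (fun a => l a * rp a) n
    have e6 := Finset.sum_range_succ (fun a => lp a + rp a) (n + 1)
    have e7 := Finset.sum_range_succ (fun a => lp a + rp a) n
    have e8 := Finset.sum_range_succ (fun a => r a + l (a + 1)) n
    have e10 := Finset.sum_range_succ (fun a => l a + r a) n
    have hrel : ∑ a ∈ range n, (l a + r a)
        = (∑ a ∈ range n, (r a + l (a + 1))) + l 0 - l n := by
      rw [Finset.sum_add_distrib, Finset.sum_add_distrib, shift_sum l n,
        Finset.sum_range_succ l]
      ring
    rw [e2, e3, e4, e5, e6, e7, e8, e10, hrel]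
    ring




open Finset

def shiftP {n : ℕ} (P : BKPuzzle (n + 1)) : BKPuzzle n where
  hl a b := P.hl a (b + 1)
  ll a b := P.ll a (b + 1)
  rl a b := P.rl a (b + 1)
  up_ok a b h := P.up_ok a (b + 1) (by omega)
  down_ok a b h := P.down_ok a (b + 1) (by omega)

/-- single labels on the NW and NE boundaries -/
def SB {n : ℕ} (P : BKPuzzle n) : Prop :=
  (∀ b, b < n → ∃ x, P.ll 0 b = Lbl.single x) ∧
  (∀ a, a < n → ∃ x, P.rl a (n - 1 - a) = Lbl.single x)

lemma SB_shift {n : ℕ} {P : BKPuzzle (n + 1)} (h : SB P) : SB (shiftP P) := by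
  constructor
  · intro b hb
    exact h.1 (b + 1) (by omega)
  · intro a ha
    have := h.2 a (by omega)
    have e : n + 1 - 1 - a = n - 1 - a + 1 := by omega
    rwa [e] at this

/-- the "phi" boundary quantity at the bottom row, nonstrict -/
def phiU {n : ℕ} (P : BKPuzzle n) (r m : ℕ → ℤ) : ℤ :=
  dsum (fun a => fRh r (P.hl a 0)) (fun a => fLh m (P.hl a 0)) n

def phiD {n : ℕ} (P : BKPuzzle n) (r m : ℕ → ℤ) : ℤ :=
  dsumS (fun a => fRh r (P.hl a 0)) (fun a => fLh m (P.hl a 0)) n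

/-- total up-cell local sum -/
def cellU {n : ℕ} (P : BKPuzzle n) (r m : ℕ → ℤ) : ℤ :=
  ∑ b ∈ range n, ∑ a ∈ range (n - b), fRr r (P.rl a b) * fLl m (P.ll a b)

/-- total down-cell local sum -/
def cellD {n : ℕ} (P : BKPuzzle n) (r m : ℕ → ℤ) : ℤ :=
  ∑ b ∈ range n, ∑ a ∈ range (n - 1 - b), fRr r (P.rl a b) * fLl m (P.ll (a + 1) b)

lemma rowU {n : ℕ} (P : BKPuzzle (n + 1)) (hSB : SB P) (r m : ℕ → ℤ) :
    phiU P r m = (∑ a ∈ range (n + 1), fRr r (P.rl a 0) * fLl m (P.ll a 0))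
      + phiU (shiftP P) r m := by
  set l' : ℕ → ℤ := fun a => fRl r (P.ll a 0) with hl'
  set r' : ℕ → ℤ := fun a => fRr r (P.rl a 0) with hr'
  set lp' : ℕ → ℤ := fun a => fLl m (P.ll a 0) with hlp'
  set rp' : ℕ → ℤ := fun a => fLr m (P.rl a 0) with hrp'
  have hup : ∀ a, a < n + 1 → upOK (P.hl a 0) (P.ll a 0) (P.rl a 0) := fun a ha =>
    P.up_ok a 0 (by omega)
  have hdn : ∀ a, a < n → downOK (P.hl a 1) (P.rl a 0) (P.ll (a + 1) 0) := fun a ha =>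
    P.down_ok a 0 (by omega)
  have e1 : phiU P r m = dsum (fun a => l' a + r' a) (fun a => lp' a + rp' a) (n + 1) := by
    unfold phiU
    refine dsum_congr (fun a ha => ?_) (fun a ha => ?_)
    · exact (upR (hup a ha) r).symm
    · exact (upL (hup a ha) m).symm
  have e2 : phiU (shiftP P) r m
      = dsum (fun a => r' a + l' (a + 1)) (fun a => rp' a + lp' (a + 1)) n := by
    unfold phiU
    refine dsum_congr (fun a ha => ?_) (fun a ha => ?_)
    · exact (dnR (hdn a ha) r).symm
    · exact (dnL (hdn a ha) m).symm
  have hl0 : l' 0 = 0 := by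
    obtain ⟨x, hx⟩ := hSB.1 0 (by omega)
    simp [hl', hx, fRl]
  have hrpn : rp' n = 0 := by
    obtain ⟨x, hx⟩ := hSB.2 n (by omega)
    have e : n + 1 - 1 - n = 0 := by omega
    rw [e] at hx
    simp [hrp', hx, fLr]
  have hz : ∑ a ∈ range n, l' (a + 1) * rp' a = 0 := by
    refine Finset.sum_eq_zero fun a ha => ?_
    rw [mem_range] at ha
    exact dnZero (hdn a ha) r m
  rw [e1, rowA l' r' lp' rp' n, e2, hl0, hrpn, hz]
  ring

lemma rowD {n : ℕ} (P : BKPuzzle (n + 1)) (hSB : SB P) (r m : ℕ → ℤ) :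
    phiD P r m = (∑ a ∈ range n, fRr r (P.rl a 0) * fLl m (P.ll (a + 1) 0))
      + phiD (shiftP P) r m := by
  set l' : ℕ → ℤ := fun a => fRl r (P.ll a 0) with hl'
  set r' : ℕ → ℤ := fun a => fRr r (P.rl a 0) with hr'
  set lp' : ℕ → ℤ := fun a => fLl m (P.ll a 0) with hlp'
  set rp' : ℕ → ℤ := fun a => fLr m (P.rl a 0) with hrp'
  have hup : ∀ a, a < n + 1 → upOK (P.hl a 0) (P.ll a 0) (P.rl a 0) := fun a ha =>
    P.up_ok a 0 (by omega)
  have hdn : ∀ a, a < n → downOK (P.hl a 1) (P.rl a 0) (P.ll (a + 1) 0) := fun a ha =>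
    P.down_ok a 0 (by omega)
  have e1 : phiD P r m = dsumS (fun a => l' a + r' a) (fun a => lp' a + rp' a) (n + 1) := by
    unfold phiD
    refine dsumS_congr (fun a ha => ?_) (fun a ha => ?_)
    · exact (upR (hup a ha) r).symm
    · exact (upL (hup a ha) m).symm
  have e2 : phiD (shiftP P) r m
      = dsumS (fun a => r' a + l' (a + 1)) (fun a => rp' a + lp' (a + 1)) n := by
    unfold phiD
    refine dsumS_congr (fun a ha => ?_) (fun a ha => ?_)
    · exact (dnR (hdn a ha) r).symm
    · exact (dnL (hdn a ha) m).symm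
  have hl0 : l' 0 = 0 := by
    obtain ⟨x, hx⟩ := hSB.1 0 (by omega)
    simp [hl', hx, fRl]
  have hrpn : rp' n = 0 := by
    obtain ⟨x, hx⟩ := hSB.2 n (by omega)
    have e : n + 1 - 1 - n = 0 := by omega
    rw [e] at hx
    simp [hrp', hx, fLr]
  have hz : ∑ a ∈ range (n + 1), l' a * rp' a = 0 := by
    refine Finset.sum_eq_zero fun a ha => ?_
    rw [mem_range] at ha
    exact upZero (hup a ha) r m
  rw [e1, rowB l' r' lp' rp' n, e2, hl0, hrpn, hz]
  ring

lemma masterU : ∀ (n : ℕ) (P : BKPuzzle n), SB P → ∀ (r m : ℕ → ℤ),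
    phiU P r m = cellU P r m := by
  intro n
  induction n with
  | zero => intro P _ r m; simp [phiU, cellU, dsum]
  | succ n ih =>
    intro P hSB r m
    rw [rowU P hSB r m, ih (shiftP P) (SB_shift hSB) r m]
    unfold cellU
    rw [Finset.sum_range_succ'
      (fun b => ∑ a ∈ range (n + 1 - b), fRr r (P.rl a b) * fLl m (P.ll a b)) n]
    simp only [Nat.succ_sub_succ_eq_sub, Nat.sub_zero, shiftP]
    ring

lemma masterD : ∀ (n : ℕ) (P : BKPuzzle n), SB P → ∀ (r m : ℕ → ℤ),
    phiD P r m = cellD P r m := by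
  intro n
  induction n with
  | zero => intro P _ r m; simp [phiD, cellD, dsumS]
  | succ n ih =>
    intro P hSB r m
    rw [rowD P hSB r m, ih (shiftP P) (SB_shift hSB) r m]
    unfold cellD
    rw [Finset.sum_range_succ'
      (fun b => ∑ a ∈ range (n + 1 - 1 - b), fRr r (P.rl a b) * fLl m (P.ll (a + 1) b)) n]
    simp only [Nat.succ_sub_succ_eq_sub, Nat.sub_zero, shiftP]
    have hidx : (∑ x ∈ range n, ∑ y ∈ range (n - (x + 1)),
          fRr r (P.rl y (x + 1)) * fLl m (P.ll (y + 1) (x + 1)))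
        = ∑ x ∈ range n, ∑ y ∈ range (n - 1 - x),
          fRr r (P.rl y (x + 1)) * fLl m (P.ll (y + 1) (x + 1)) :=
      Finset.sum_congr rfl fun x _ => by
        rw [show n - (x + 1) = n - 1 - x from by omega]
    rw [hidx]
    ring


/-- indicator function -/
def eI (k : ℕ) : ℕ → ℤ := fun x => if x = k then 1 else 0

lemma cell_nenw {B L R : Lbl} (h : upOK B L R) {i j : ℕ} (hij : j < i) :
    fRr (eI i) R * fLl (eI j) L =
      ((if R = Lbl.pair i j then (1:ℤ) else 0) + (if L = Lbl.pair i j then (1:ℤ) else 0)) := by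
  rcases h with ⟨a, hB, hL, hR⟩ | ⟨a, b, hab, hB, hL, hR⟩ | ⟨a, b, hab, hB, hL, hR⟩ |
    ⟨a, b, hab, hB, hL, hR⟩ <;> subst hL <;> subst hR <;>
    simp only [fRr, fLl, eI, Lbl.pair.injEq] <;> split_ifs <;> simp_all <;> omega

lemma cell_south {B L R : Lbl} (h : upOK B L R) {i j : ℕ} (hij : j < i) :
    fRr (eI j) R * fLl (eI i) L = (if B = Lbl.pair i j then (1:ℤ) else 0) := by
  rcases h with ⟨a, hB, hL, hR⟩ | ⟨a, b, hab, hB, hL, hR⟩ | ⟨a, b, hab, hB, hL, hR⟩ |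
    ⟨a, b, hab, hB, hL, hR⟩ <;> subst hB <;> subst hL <;> subst hR <;>
    simp only [fRr, fLl, eI, Lbl.pair.injEq, reduceCtorEq] <;> split_ifs <;>
    simp_all <;> omega

lemma cell_uptri {B L R : Lbl} (h : upOK B L R) (k : ℕ) :
    fRr (eI k) R * fLl (eI k) L =
      (if B = Lbl.single k ∧ L = Lbl.single k ∧ R = Lbl.single k then (1:ℤ) else 0) := by
  rcases h with ⟨a, hB, hL, hR⟩ | ⟨a, b, hab, hB, hL, hR⟩ | ⟨a, b, hab, hB, hL, hR⟩ |
    ⟨a, b, hab, hB, hL, hR⟩ <;> subst hB <;> subst hL <;> subst hR <;>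
    simp only [fRr, fLl, eI, Lbl.single.injEq, reduceCtorEq] <;> split_ifs <;>
    simp_all <;> omega

lemma cell_dntri {T L R : Lbl} (h : downOK T L R) (k : ℕ) :
    fRr (eI k) L * fLl (eI k) R =
      (if T = Lbl.single k ∧ L = Lbl.single k ∧ R = Lbl.single k then (1:ℤ) else 0) := by
  rcases h with ⟨a, hB, hL, hR⟩ | ⟨a, b, hab, hB, hL, hR⟩ | ⟨a, b, hab, hB, hL, hR⟩ |
    ⟨a, b, hab, hB, hL, hR⟩ <;> subst hB <;> subst hL <;> subst hR <;>
    simp only [fRr, fLl, eI, Lbl.single.injEq, reduceCtorEq] <;> split_ifs <;>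
    simp_all <;> omega

lemma card_conv (n : ℕ) (Q : ℕ → ℕ → Prop) [∀ a b, Decidable (Q a b)] :
    (((range n ×ˢ range n).filter (fun ab => ab.1 + ab.2 < n ∧ Q ab.1 ab.2)).card : ℤ)
      = ∑ b ∈ range n, ∑ a ∈ range (n - b), (if Q a b then (1:ℤ) else 0) := by
  rw [Finset.card_filter]
  push_cast
  rw [Finset.sum_product, Finset.sum_comm]
  refine Finset.sum_congr rfl fun b hb => ?_
  rw [mem_range] at hb
  have h1 : ∀ a ∈ range n, (if a + b < n ∧ Q a b then (1:ℤ) else 0)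
      = (if a < n - b then (if Q a b then (1:ℤ) else 0) else 0) := by
    intro a _
    by_cases hq : Q a b
    · by_cases h : a + b < n
      · simp [hq, h, show a < n - b from by omega]
      · simp [hq, h, show ¬ a < n - b from by omega]
    · simp [hq]
  rw [Finset.sum_congr rfl h1]
  rw [← Finset.sum_subset (Finset.range_subset_range.2 (by omega : n - b ≤ n))
    (fun a _ ha => if_neg (by rw [mem_range] at ha; omega))]
  refine Finset.sum_congr rfl fun a ha => ?_
  rw [mem_range] at ha
  exact if_pos ha

lemma card_conv2 (n : ℕ) (Q : ℕ → ℕ → Prop) [∀ a b, Decidable (Q a b)] :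
    (((range n ×ˢ range n).filter (fun ab => ab.1 + ab.2 + 1 < n ∧ Q ab.1 ab.2)).card : ℤ)
      = ∑ b ∈ range n, ∑ a ∈ range (n - 1 - b), (if Q a b then (1:ℤ) else 0) := by
  rw [Finset.card_filter]
  push_cast
  rw [Finset.sum_product, Finset.sum_comm]
  refine Finset.sum_congr rfl fun b hb => ?_
  rw [mem_range] at hb
  have h1 : ∀ a ∈ range n, (if a + b + 1 < n ∧ Q a b then (1:ℤ) else 0)
      = (if a < n - 1 - b then (if Q a b then (1:ℤ) else 0) else 0) := by
    intro a _
    by_cases hq : Q a b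
    · by_cases h : a + b + 1 < n
      · simp [hq, h, show a < n - 1 - b from by omega]
      · simp [hq, h, show ¬ a < n - 1 - b from by omega]
    · simp [hq]
  rw [Finset.sum_congr rfl h1]
  rw [← Finset.sum_subset (Finset.range_subset_range.2 (by omega : n - 1 - b ≤ n))
    (fun a _ ha => if_neg (by rw [mem_range] at ha; omega))]
  refine Finset.sum_congr rfl fun a ha => ?_
  rw [mem_range] at ha
  exact if_pos ha

lemma list_count (σ : List ℕ) (k : ℕ) :
    ∑ a ∈ range σ.length, (if σ.getD a 0 = k then (1:ℤ) else 0) = (σ.count k : ℤ) := by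
  induction σ with
  | nil => simp
  | cons x xs ih =>
    rw [List.length_cons, Finset.sum_range_succ'
      (fun a => if (x :: xs).getD a 0 = k then (1:ℤ) else 0) xs.length]
    simp only [List.getD_cons_succ, List.getD_cons_zero]
    rw [ih, List.count_cons]
    rcases eq_or_ne x k with h | h
    · subst h; simp
    · push_cast
      simp [h, Ne.symm h]


lemma cellU_south {n : ℕ} (P : BKPuzzle n) {i j : ℕ} (hij : j < i) :
    cellU P (eI j) (eI i)
      = ∑ b ∈ range n, ∑ a ∈ range (n - b), (if P.hl a b = Lbl.pair i j then (1:ℤ) else 0) := by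
  unfold cellU
  refine Finset.sum_congr rfl fun b hb => Finset.sum_congr rfl fun a ha => ?_
  rw [mem_range] at hb ha
  exact cell_south (P.up_ok a b (by omega)) hij

lemma cellU_nenw {n : ℕ} (P : BKPuzzle n) {i j : ℕ} (hij : j < i) :
    cellU P (eI i) (eI j)
      = (∑ b ∈ range n, ∑ a ∈ range (n - b), (if P.rl a b = Lbl.pair i j then (1:ℤ) else 0))
      + (∑ b ∈ range n, ∑ a ∈ range (n - b), (if P.ll a b = Lbl.pair i j then (1:ℤ) else 0)) := by
  unfold cellU
  rw [← Finset.sum_add_distrib]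
  refine Finset.sum_congr rfl fun b hb => ?_
  rw [← Finset.sum_add_distrib]
  refine Finset.sum_congr rfl fun a ha => ?_
  rw [mem_range] at hb ha
  exact cell_nenw (P.up_ok a b (by omega)) hij

lemma cellU_uptri {n : ℕ} (P : BKPuzzle n) (k : ℕ) :
    cellU P (eI k) (eI k)
      = ∑ b ∈ range n, ∑ a ∈ range (n - b),
          (if P.hl a b = Lbl.single k ∧ P.ll a b = Lbl.single k ∧ P.rl a b = Lbl.single k
            then (1:ℤ) else 0) := by
  unfold cellU
  refine Finset.sum_congr rfl fun b hb => Finset.sum_congr rfl fun a ha => ?_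
  rw [mem_range] at hb ha
  exact cell_uptri (P.up_ok a b (by omega)) k

lemma cellD_dntri {n : ℕ} (P : BKPuzzle n) (k : ℕ) :
    cellD P (eI k) (eI k)
      = ∑ b ∈ range n, ∑ a ∈ range (n - 1 - b),
          (if P.hl a (b + 1) = Lbl.single k ∧ P.rl a b = Lbl.single k ∧
              P.ll (a + 1) b = Lbl.single k then (1:ℤ) else 0) := by
  unfold cellD
  refine Finset.sum_congr rfl fun b hb => Finset.sum_congr rfl fun a ha => ?_
  rw [mem_range] at hb ha
  exact cell_dntri (P.down_ok a b (by omega)) k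

lemma phiU_chi {n : ℕ} (P : BKPuzzle n) (σ : List ℕ)
    (hσ : ∀ a, a < n → P.hl a 0 = Lbl.single (σ.getD a 0)) (i j : ℕ) :
    phiU P (eI i) (eI j) = dsum (fun a => if σ.getD a 0 = i then (1:ℤ) else 0)
      (fun a => if σ.getD a 0 = j then (1:ℤ) else 0) n := by
  unfold phiU
  refine dsum_congr (fun a ha => ?_) (fun a ha => ?_) <;> rw [hσ a ha] <;> rfl

lemma phiD_chi {n : ℕ} (P : BKPuzzle n) (σ : List ℕ)
    (hσ : ∀ a, a < n → P.hl a 0 = Lbl.single (σ.getD a 0)) (i j : ℕ) :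
    phiD P (eI i) (eI j) = dsumS (fun a => if σ.getD a 0 = i then (1:ℤ) else 0)
      (fun a => if σ.getD a 0 = j then (1:ℤ) else 0) n := by
  unfold phiD
  refine dsumS_congr (fun a ha => ?_) (fun a ha => ?_) <;> rw [hσ a ha] <;> rfl


lemma chi_sum (σ : List ℕ) (n : ℕ) (hlen : σ.length = n) (k : ℕ) :
    ∑ a ∈ range n, (if σ.getD a 0 = k then (1:ℤ) else 0) = (σ.count k : ℤ) := by
  subst hlen
  exact list_count σ k

lemma chi_diag (σ : List ℕ) (n : ℕ) {i j : ℕ} (hij : i ≠ j) :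
    ∑ a ∈ range n, (if σ.getD a 0 = i then (1:ℤ) else 0) *
      (if σ.getD a 0 = j then (1:ℤ) else 0) = 0 := by
  refine Finset.sum_eq_zero fun a _ => ?_
  by_cases h : σ.getD a 0 = i
  · rw [if_pos h, if_neg (fun hh => hij (h.symm.trans hh))]; ring
  · rw [if_neg h]; ring

lemma chi_sq (σ : List ℕ) (n : ℕ) (k : ℕ) :
    ∑ a ∈ range n, (if σ.getD a 0 = k then (1:ℤ) else 0) *
      (if σ.getD a 0 = k then (1:ℤ) else 0)
    = ∑ a ∈ range n, (if σ.getD a 0 = k then (1:ℤ) else 0) := by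
  refine Finset.sum_congr rfl fun a _ => ?_
  by_cases h : σ.getD a 0 = k
  · rw [if_pos h]; ring
  · rw [if_neg h]; ring

end BKaux

/-- in a BK-puzzle with boundary content (n_1,…,n_d), for i > j the
total number of (i,j)-rhombi is n_i·n_j, there are C(n_i+1,2) upward-pointing
i-triangles and C(n_i,2) downward-pointing i-triangles. -/
theorem rhombi_and_triangle_counts {n : ℕ} (P : BKPuzzle n) (π ρ σ : List ℕ)
    (h : HasBoundary P π ρ σ) :
    (∀ i j, j < i → rhombiCount P i j = σ.count i * σ.count j) ∧
    (∀ i, upTriCount P i = Nat.choose (σ.count i + 1) 2 ∧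
          downTriCount P i = Nat.choose (σ.count i) 2) := by
  classical
  obtain ⟨hπlen, hρlen, hσlen, hπ, hρ, hσ⟩ := h
  have hSB : BKaux.SB P := ⟨fun b hb => ⟨_, hπ b hb⟩, fun a ha => ⟨_, hρ a ha⟩⟩
  constructor
  · -- rhombi
    intro i j hij
    have hz : (rhombiCount P i j : ℤ) = ((σ.count i : ℤ) * (σ.count j : ℤ)) := by
      have e1 : (rhombiCount P i j : ℤ)
          = BKaux.cellU P (BKaux.eI j) (BKaux.eI i) + BKaux.cellU P (BKaux.eI i) (BKaux.eI j) := by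
        unfold rhombiCount southPointingCount nwPointingCount nePointingCount
        push_cast
        rw [BKaux.card_conv n (fun a b => P.hl a b = Lbl.pair i j),
            BKaux.card_conv n (fun a b => P.ll a b = Lbl.pair i j),
            BKaux.card_conv n (fun a b => P.rl a b = Lbl.pair i j),
            BKaux.cellU_south P hij, BKaux.cellU_nenw P hij]
        ring
      rw [e1, ← BKaux.masterU n P hSB, ← BKaux.masterU n P hSB,
          BKaux.phiU_chi P σ hσ j i, BKaux.phiU_chi P σ hσ i j]
      have hswap := BKaux.dsum_swap (fun a => if σ.getD a 0 = i then (1:ℤ) else 0)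
        (fun a => if σ.getD a 0 = j then (1:ℤ) else 0) n
      rw [BKaux.chi_diag σ n (by omega : i ≠ j), BKaux.chi_sum σ n hσlen i,
          BKaux.chi_sum σ n hσlen j] at hswap
      linarith [hswap]
    exact_mod_cast hz
  · -- triangles
    intro k
    set c := σ.count k with hc
    have key : 2 * BKaux.dsum (fun a => if σ.getD a 0 = k then (1:ℤ) else 0)
        (fun a => if σ.getD a 0 = k then (1:ℤ) else 0) n = (c : ℤ) * c + c := by
      have hswap := BKaux.dsum_swap (fun a => if σ.getD a 0 = k then (1:ℤ) else 0)
        (fun a => if σ.getD a 0 = k then (1:ℤ) else 0) n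
      rw [BKaux.chi_sq σ n k, BKaux.chi_sum σ n hσlen k] at hswap
      linarith [hswap]
    have hup : (upTriCount P k : ℤ)
        = BKaux.dsum (fun a => if σ.getD a 0 = k then (1:ℤ) else 0)
          (fun a => if σ.getD a 0 = k then (1:ℤ) else 0) n := by
      have e1 : (upTriCount P k : ℤ) = BKaux.cellU P (BKaux.eI k) (BKaux.eI k) := by
        unfold upTriCount
        rw [BKaux.card_conv n (fun a b => P.hl a b = Lbl.single k ∧ P.ll a b = Lbl.single k ∧
          P.rl a b = Lbl.single k), BKaux.cellU_uptri P k]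
      rw [e1, ← BKaux.masterU n P hSB, BKaux.phiU_chi P σ hσ k k]
    have hdn : (downTriCount P k : ℤ)
        = BKaux.dsum (fun a => if σ.getD a 0 = k then (1:ℤ) else 0)
          (fun a => if σ.getD a 0 = k then (1:ℤ) else 0) n - c := by
      have e1 : (downTriCount P k : ℤ) = BKaux.cellD P (BKaux.eI k) (BKaux.eI k) := by
        unfold downTriCount
        rw [BKaux.card_conv2 n (fun a b => P.hl a (b + 1) = Lbl.single k ∧
          P.rl a b = Lbl.single k ∧ P.ll (a + 1) b = Lbl.single k), BKaux.cellD_dntri P k]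
      rw [e1, ← BKaux.masterD n P hSB, BKaux.phiD_chi P σ hσ k k]
      have := BKaux.dsum_strict (fun a => if σ.getD a 0 = k then (1:ℤ) else 0)
        (fun a => if σ.getD a 0 = k then (1:ℤ) else 0) n
      rw [BKaux.chi_sq σ n k, BKaux.chi_sum σ n hσlen k] at this
      linarith [this]
    have hch1 : 2 * ((c + 1).choose 2) = (c + 1) * c := by
      rw [Nat.choose_two_right, Nat.add_sub_cancel]
      have h2 : 2 ∣ (c + 1) * c := by
        rcases Nat.even_mul_succ_self c with ⟨m, hm⟩
        exact ⟨m, by rw [mul_comm]; omega⟩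
      rw [Nat.mul_div_cancel' h2]
    have hch2 : 2 * (c.choose 2) = c * (c - 1) := by
      rw [Nat.choose_two_right]
      have h2 : 2 ∣ c * (c - 1) := by
        rcases Nat.even_mul_succ_self (c - 1) with ⟨m, hm⟩
        rcases Nat.eq_zero_or_pos c with h0 | h0
        · exact ⟨0, by simp [h0]⟩
        · exact ⟨m, by rw [show c * (c - 1) = (c - 1) * (c - 1 + 1) from by
            rw [Nat.sub_add_cancel h0]; ring]; omega⟩
      rw [Nat.mul_div_cancel' h2]
    constructor
    · have hz : (upTriCount P k : ℤ) = ((c + 1).choose 2 : ℤ) := by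
        have hcast : (2:ℤ) * ((c + 1).choose 2 : ℤ) = ((c:ℤ) + 1) * c := by
          exact_mod_cast congrArg (fun x : ℕ => (x : ℤ)) hch1
        have := hup
        nlinarith [key, hcast]
      exact_mod_cast hz
    · have hz : (downTriCount P k : ℤ) = (c.choose 2 : ℤ) := by
        have hcast : (2:ℤ) * (c.choose 2 : ℤ) = (c:ℤ) * c - c := by
          have : ((2 * c.choose 2 : ℕ) : ℤ) = ((c * (c - 1) : ℕ) : ℤ) := by
            exact_mod_cast congrArg (fun x : ℕ => (x : ℤ)) hch2
          rcases Nat.eq_zero_or_pos c with h0 | h0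
          · simp [h0]
          · push_cast [Nat.cast_sub h0] at this
            push_cast
            linarith [this]
        nlinarith [key, hdn, hcast]
      exact_mod_cast hz
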